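/- Define for a continuous character η : Q_p^× → C^× the epsilon factor ε(η, s) = 1 if η is unramified, and ε(η, s) = p^{-ns} η(p)^n G(η^{-1}) if η has conductor p^n with n ≥ 1, where G is the Gauss sum relative to the additive character ψ(x) = ζ_{p^n}^{p^n x}. Then ε(η, s) · ε(η^{-1}, 1 − s) = η(−1). -/

import Mathlib

/-!
In the product `ε(η, s) ε(η⁻¹, 1 - s)` the powers of `p` multiply to `p^{-n}` and `η(p)^n` cancels
against `η⁻¹(p)^n`, so everything reduces to `G(η₀⁻¹) G(η₀) = η₀(-1) p^n`. Because `η₀` is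
primitive, twisting the additive character by `a` multiplies `G(η₀)` by `η₀⁻¹(a)` (for nonunits
both sides vanish). Expanding `G(η₀⁻¹)` with this, orthogonality of the additive character leaves
only the term `x = -1` of `Σ_x η₀(x) Σ_a ψ(a (x + 1))`.
-/

open Finset

theorem IsPrimitiveRoot.of_compatible_system {M : Type*} [CommMonoid M] {p : ℕ} [Fact p.Prime]
    {ζ : ℕ → M} (h0 : ζ 0 = 1) (h1 : ζ 1 ≠ 1) (hc : ∀ m, ζ (m + 1) ^ p = ζ m) (n : ℕ) :
    IsPrimitiveRoot (ζ n) (p ^ n) := by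
  have hpow : ∀ k m, ζ (m + k) ^ p ^ k = ζ m := by
    intro k
    induction k with
    | zero => simp
    | succ k ih => intro m; rw [pow_succ', pow_mul, ← add_assoc, hc, ih]
  rcases n with _ | k
  · simp [h0]
  · refine IsPrimitiveRoot.iff_orderOf.mpr (orderOf_eq_prime_pow ?_ ?_)
    · rwa [add_comm, hpow]
    · rw [← h0, ← hpow (k + 1) 0, zero_add]

theorem MulChar.ofUnitHom_inv {R R' : Type*} [CommMonoid R] [Field R'] (f : Rˣ →* R'ˣ) :
    ofUnitHom f⁻¹ = (ofUnitHom f)⁻¹ := by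
  ext a
  simp [inv_apply_eq_inv']

theorem gaussSum_ofUnitHom {R R' : Type*} [CommRing R] [Fintype R] [DecidableEq R] [CommRing R']
    (f : Rˣ →* R'ˣ) (ψ : AddChar R R') :
    gaussSum (MulChar.ofUnitHom f) ψ = ∑ a : Rˣ, (f a : R') * ψ a := by
  refine (Fintype.sum_of_injective _ Units.val_injective _ _ ?_ fun a => ?_).symm
  · intro x hx
    rw [MulChar.map_nonunit _ fun h => hx ⟨h.unit, h.unit_spec⟩, zero_mul]
  · rw [MulChar.ofUnitHom_coe]

theorem PadicInt.unitsMap_map_toZModPow {p : ℕ} [Fact p.Prime] {m n : ℕ} (h : m ≤ n)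
    (u : ℤ_[p]ˣ) :
    ZMod.unitsMap (pow_dvd_pow p h) (Units.map (toZModPow n).toMonoidHom u) =
      Units.map (toZModPow m).toMonoidHom u := by
  ext
  simp only [ZMod.unitsMap_def, Units.coe_map]
  exact congrArg (· (u : ℤ_[p])) (zmod_cast_comp_toZModPow m n h)

namespace DirichletCharacter

theorem isPrimitive_of_unitsMap_eq_one {R : Type*} [CommMonoidWithZero R] {p : ℕ} [Fact p.Prime]
    {n : ℕ} (χ : DirichletCharacter R (p ^ n)) {u : (ZMod (p ^ n))ˣ}
    (hu : ZMod.unitsMap (pow_dvd_pow p (n.sub_le 1)) u = 1) (hχu : χ u ≠ 1) :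
    χ.IsPrimitive := by
  obtain ⟨k, hkn, hk⟩ := (Nat.dvd_prime_pow Fact.out).mp χ.conductor_dvd_level
  rw [isPrimitive_def, hk]
  refine congrArg _ (hkn.antisymm (not_lt.mp fun hlt => hχu ?_))
  have hfac : χ.FactorsThrough (p ^ (n - 1)) :=
    FactorsThrough.mono χ (hk ▸ χ.factorsThrough_conductor) (pow_dvd_pow p (by omega))
      (pow_dvd_pow p (n.sub_le 1))
  have := (factorsThrough_iff_ker_unitsMap _).mp hfac hu
  rw [MonoidHom.mem_ker, Units.ext_iff] at this
  simpa using this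

end DirichletCharacter

theorem gaussSum_inv_mul_gaussSum_of_isPrimitive {N : ℕ} [NeZero N] {R : Type*} [CommRing R]
    [IsDomain R] {χ : DirichletCharacter R N} (hχ : χ.IsPrimitive) {e : AddChar (ZMod N) R}
    (he : e.IsPrimitive) :
    gaussSum χ⁻¹ e * gaussSum χ e = χ (-1) * N := by
  have hshift (a : ZMod N) : χ⁻¹ a * gaussSum χ e = ∑ x, χ x * e (x * a) := by
    rw [← gaussSum_mulShift_of_isPrimitive e hχ, gaussSum]
    simp only [AddChar.mulShift_apply, mul_comm a]
  calc gaussSum χ⁻¹ e * gaussSum χ e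
      = ∑ a, e a * ∑ x, χ x * e (x * a) := by
        simp only [gaussSum, sum_mul, ← hshift]
        exact sum_congr rfl fun a _ => by ring
    _ = ∑ x, χ x * ∑ a, e (a * (x + 1)) := by
        simp only [mul_sum]
        rw [sum_comm]
        refine sum_congr rfl fun x _ => sum_congr rfl fun a _ => ?_
        rw [mul_add, mul_one, AddChar.map_add_eq_mul]
        ring_nf
    _ = χ (-1) * N := by
        simp only [AddChar.sum_mulShift _ he, add_eq_zero_iff_eq_neg, Nat.cast_ite, Nat.cast_zero,
          mul_ite, mul_zero, sum_ite_eq', mem_univ, if_true, ZMod.card]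

theorem sum_units_inv_mul_sum_units_of_isPrimitive {N : ℕ} [NeZero N] {z : ℂ}
    (hz : IsPrimitiveRoot z N) {f : (ZMod N)ˣ →* ℂˣ}
    (hf : DirichletCharacter.IsPrimitive (MulChar.ofUnitHom f : DirichletCharacter ℂ N)) :
    (∑ a : (ZMod N)ˣ, (f⁻¹ a : ℂ) * z ^ (a : ZMod N).val) *
        ∑ a : (ZMod N)ˣ, (f a : ℂ) * z ^ (a : ZMod N).val = f (-1) * N := by
  have h := gaussSum_inv_mul_gaussSum_of_isPrimitive hf
    (AddChar.zmodChar_primitive_of_primitive_root N hz)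
  have hneg : MulChar.ofUnitHom f (-1) = f (-1) := by
    rw [← MulChar.ofUnitHom_coe, Units.val_neg, Units.val_one]
  rwa [← MulChar.ofUnitHom_inv, gaussSum_ofUnitHom, gaussSum_ofUnitHom, hneg] at h

theorem Complex.cpow_neg_mul_mul_cpow_neg_mul_one_sub {x : ℂ} (hx : x ≠ 0) (n : ℕ) (s : ℂ) :
    x ^ (-(n : ℂ) * s) * x ^ (-(n : ℂ) * (1 - s)) = (x ^ n)⁻¹ := by
  rw [← cpow_add _ _ hx, show -(n : ℂ) * s + -(n : ℂ) * (1 - s) = -n by ring, cpow_neg,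
    cpow_natCast]

theorem epsilon_factor_functional_equation_GL1_general
    (p : ℕ) [Fact p.Prime] (ζ : ℕ → ℂ)
    (hζ0 : ζ 0 = 1) (hζ1 : ζ 1 ≠ 1) (hζc : ∀ m : ℕ, ζ (m + 1) ^ p = ζ m)
    (hp0 : (p : ℚ_[p]) ≠ 0)
    (η : ℚ_[p]ˣ →* ℂˣ)
    (n : ℕ) (η₀ : (ZMod (p ^ n))ˣ →* ℂˣ)
    (hη₀ : ∀ u : ℤ_[p]ˣ,
      η (Units.map (PadicInt.Coe.ringHom (p := p)).toMonoidHom u) =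
        η₀ (Units.map (PadicInt.toZModPow n).toMonoidHom u))
    (hprim : n ≠ 0 → ∃ u : ℤ_[p]ˣ,
      PadicInt.toZModPow (n - 1) (u : ℤ_[p]) = 1 ∧
        η (Units.map (PadicInt.Coe.ringHom (p := p)).toMonoidHom u) ≠ 1)
    (G : ((ZMod (p ^ n))ˣ →* ℂˣ) → ℂ)
    (hG : ∀ χ : (ZMod (p ^ n))ˣ →* ℂˣ,
      G χ = ∑ a : (ZMod (p ^ n))ˣ, (χ a : ℂ) * ζ n ^ ((a : ZMod (p ^ n)).val))
    (ε : (ℚ_[p]ˣ →* ℂˣ) → ℂ → ℂ)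
    (hε : ∀ s : ℂ,
      ε η s = if n = 0 then 1
        else (p : ℂ) ^ (-(n : ℂ) * s) * ((η (Units.mk0 (p : ℚ_[p]) hp0) : ℂ) ^ n) * G η₀⁻¹)
    (hε' : ∀ s : ℂ,
      ε η⁻¹ s = if n = 0 then 1
        else (p : ℂ) ^ (-(n : ℂ) * s) * ((η⁻¹ (Units.mk0 (p : ℚ_[p]) hp0) : ℂ) ^ n) * G η₀) :
    ∀ s : ℂ, ε η s * ε η⁻¹ (1 - s) = (η (-1 : ℚ_[p]ˣ) : ℂ) := by
  intro s
  have hneg : (η (-1) : ℂ) = η₀ (-1) := by simpa using congrArg Units.val (hη₀ (-1))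
  rw [hε, hε', hneg]
  split_ifs with hn
  · subst hn
    have hneg_one : (-1 : (ZMod (p ^ 0))ˣ) = 1 := Units.ext (Subsingleton.elim (α := ZMod 1) _ _)
    rw [hneg_one, map_one, Units.val_one, one_mul]
  obtain ⟨u, hu, hηu⟩ := hprim hn
  have hχ : DirichletCharacter.IsPrimitive
      (MulChar.ofUnitHom η₀ : DirichletCharacter ℂ (p ^ n)) := by
    refine DirichletCharacter.isPrimitive_of_unitsMap_eq_one _
      (u := Units.map (PadicInt.toZModPow n).toMonoidHom u) ?_
      (by rwa [MulChar.ofUnitHom_coe, ← hη₀, Ne, Units.val_eq_one])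
    rw [PadicInt.unitsMap_map_toZModPow (n.sub_le 1)]
    ext
    simpa using hu
  have hGG : G η₀⁻¹ * G η₀ = η₀ (-1) * (p ^ n : ℕ) := by
    rw [hG, hG]
    exact sum_units_inv_mul_sum_units_of_isPrimitive
      (IsPrimitiveRoot.of_compatible_system hζ0 hζ1 hζc n) hχ
  have hpC : (p : ℂ) ≠ 0 := Nat.cast_ne_zero.mpr (Fact.out : p.Prime).ne_zero
  calc _ = (p ^ (-(n : ℂ) * s) * p ^ (-(n : ℂ) * (1 - s))) *
        ((η (Units.mk0 (p : ℚ_[p]) hp0) * η⁻¹ (Units.mk0 (p : ℚ_[p]) hp0) : ℂˣ) : ℂ) ^ n *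
        (G η₀⁻¹ * G η₀) := by push_cast; ring
    _ = η₀ (-1) := by
      rw [Complex.cpow_neg_mul_mul_cpow_neg_mul_one_sub hpC, hGG, MonoidHom.inv_apply,
        mul_inv_cancel, Units.val_one, one_pow, mul_one]
      push_cast
      field_simp

/-- For a continuous character `η : ℚ_p^× → ℂ^×`, define
`ε(η, s) = 1` if `η` is unramified and `ε(η, s) = p^{-ns} η(p)^n G(η⁻¹)` if `η` has conductor
`p^n` (`n ≥ 1`), where `G` is the Gauss sum relative to the additive character determined by
the fixed compatible system `(ζ_{p^n})` of `p`-power roots of unity.  Then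
`ε(η, s) · ε(η⁻¹, 1-s) = η(-1)`.

Here the conductor data is encoded by `n` together with a character
`η₀ : (ℤ/p^nℤ)^× → ℂ^×` through which `η` factors on `ℤ_p^×` (`hη₀`), and the primitivity of
`η₀` (minimality of `n`) is `hprim`; `G χ = Σ_{a ∈ (ℤ/p^n)^×} χ(a) ζ_{p^n}^a`. -/
theorem epsilon_factor_functional_equation_GL1
    (p : ℕ) [Fact p.Prime] (ζ : ℕ → ℂ)
    (hζ0 : ζ 0 = 1) (hζ1 : ζ 1 ≠ 1) (hζc : ∀ m : ℕ, ζ (m + 1) ^ p = ζ m)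
    (hp0 : (p : ℚ_[p]) ≠ 0)
    (η : ℚ_[p]ˣ →* ℂˣ) (hcont : Continuous η)
    (n : ℕ) (η₀ : (ZMod (p ^ n))ˣ →* ℂˣ)
    (hη₀ : ∀ u : ℤ_[p]ˣ,
      η (Units.map (PadicInt.Coe.ringHom (p := p)).toMonoidHom u) =
        η₀ (Units.map (PadicInt.toZModPow n).toMonoidHom u))
    (hprim : n ≠ 0 → ∃ u : ℤ_[p]ˣ,
      PadicInt.toZModPow (n - 1) (u : ℤ_[p]) = 1 ∧
        η (Units.map (PadicInt.Coe.ringHom (p := p)).toMonoidHom u) ≠ 1)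
    (G : ((ZMod (p ^ n))ˣ →* ℂˣ) → ℂ)
    (hG : ∀ χ : (ZMod (p ^ n))ˣ →* ℂˣ,
      G χ = ∑ a : (ZMod (p ^ n))ˣ, (χ a : ℂ) * ζ n ^ ((a : ZMod (p ^ n)).val))
    (ε : (ℚ_[p]ˣ →* ℂˣ) → ℂ → ℂ)
    (hε : ∀ s : ℂ,
      ε η s = if n = 0 then 1
        else (p : ℂ) ^ (-(n : ℂ) * s) * ((η (Units.mk0 (p : ℚ_[p]) hp0) : ℂ) ^ n) * G η₀⁻¹)
    (hε' : ∀ s : ℂ,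
      ε η⁻¹ s = if n = 0 then 1
        else (p : ℂ) ^ (-(n : ℂ) * s) * ((η⁻¹ (Units.mk0 (p : ℚ_[p]) hp0) : ℂ) ^ n) * G η₀) :
    ∀ s : ℂ, ε η s * ε η⁻¹ (1 - s) = (η (-1 : ℚ_[p]ˣ) : ℂ) :=
  epsilon_factor_functional_equation_GL1_general p ζ hζ0 hζ1 hζc hp0 η n η₀ hη₀ hprim G hG ε hε hε'
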